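/- On a connected locally finite graph G=(V,E) with μ(x) ≥ μ_min > 0 and Σ_{y∼x}ω_{xy} ≤ C for all x, the space C_c(V) of finitely supported functions is dense in W^{1,2}(V): for every u with ∫_V(|∇u|² + u²)dμ < ∞ and every ε > 0 there exists a finitely supported v with ∫_V(|∇(u−v)|² + (u−v)²)dμ < ε. Moreover the cut-off approximants can be taken as v = u·η_k where η_k is the piecewise-linear cutoff equal to 1 on the ball of radius k, 0 outside the ball of radius 2k. -/

import Mathlib

/-!
The error `u η_k - u` vanishes, together with its gradient, at every vertex of distance `< k`
from `x₀`. Since `η_k` takes values in `[0, 1]`, the elementary inequality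
`((a s - a) - (b t - b))² ≤ 2 (a - b)² + 2 b²` and the degree bound `∑ y, ω x y ≤ C ≤ (C / μmin) μ x`
bound its energy density pointwise by `(3 + C / μmin)` times that of `u`, so dominated convergence
for sums sends its energy to `0`. Balls of a connected locally finite graph are finite, hence
`u η_k` is finitely supported.
-/

open Filter Topology

structure GraphData (V : Type*) where
  ω : V → V → ℝ
  μ : V → ℝ
  sym : ∀ x y, ω x y = ω y x
  nonneg : ∀ x y, 0 ≤ ω x y
  loopless : ∀ x, ω x x = 0
  locfin : ∀ x, {y | ω x y ≠ 0}.Finite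
  μpos : ∀ x, 0 < μ x

variable {V : Type*}

noncomputable def GraphData.lap (g : GraphData V) (u : V → ℝ) (x : V) : ℝ :=
  (1 / g.μ x) * ∑' y, g.ω x y * (u y - u x)

noncomputable def GraphData.grad (g : GraphData V) (u v : V → ℝ) (x : V) : ℝ :=
  (1 / (2 * g.μ x)) * ∑' y, g.ω x y * (u y - u x) * (v y - v x)

noncomputable def GraphData.integral (g : GraphData V) (f : V → ℝ) : ℝ :=
  ∑' x, g.μ x * f x

def GraphData.G (g : GraphData V) : SimpleGraph V where
  Adj x y := 0 < g.ω x y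
  symm := ⟨fun x y (h : 0 < g.ω x y) => show 0 < g.ω y x by rwa [g.sym y x]⟩
  loopless := ⟨fun x (h : 0 < g.ω x x) => by simp [g.loopless x] at h⟩

noncomputable def GraphData.enormSq (g : GraphData V) (a : V → ℝ) (lam : ℝ) (u : V → ℝ) : ℝ :=
  ∑' x, g.μ x * ((g.lap u x) ^ 2 + g.grad u u x + (lam * a x + 1) * (u x) ^ 2)

def GraphData.memE (g : GraphData V) (a : V → ℝ) (lam : ℝ) (u : V → ℝ) : Prop :=
  Summable fun x => g.μ x * ((g.lap u x) ^ 2 + g.grad u u x + (lam * a x + 1) * (u x) ^ 2)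

noncomputable def GraphData.lpInt (g : GraphData V) (p : ℝ) (u : V → ℝ) : ℝ :=
  ∑' x, g.μ x * |u x| ^ p

noncomputable def GraphData.Jlam (g : GraphData V) (a : V → ℝ) (lam p : ℝ) (u : V → ℝ) : ℝ :=
  (1 / 2) * g.enormSq a lam u - (1 / p) * g.lpInt p u

def GraphData.Nehari (g : GraphData V) (a : V → ℝ) (lam p : ℝ) : Set (V → ℝ) :=
  {u | u ≠ 0 ∧ g.memE a lam u ∧ g.enormSq a lam u = g.lpInt p u}

noncomputable def GraphData.Jderiv (g : GraphData V) (a : V → ℝ) (lam p : ℝ) (u φ : V → ℝ) : ℝ :=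
  (∑' x, g.μ x * (g.lap u x * g.lap φ x + g.grad u φ x + (lam * a x + 1) * u x * φ x))
    - ∑' x, g.μ x * (|u x| ^ (p - 2) * u x * φ x)

def GraphData.bdry (g : GraphData V) (Ω : Set V) : Set V :=
  {y | y ∉ Ω ∧ ∃ x ∈ Ω, 0 < g.ω x y}

noncomputable def GraphData.hnormSq (g : GraphData V) (Ω : Set V) (u : V → ℝ) : ℝ :=
  (∑' x : ↥(Ω ∪ g.bdry Ω), g.μ x * ((g.lap u x) ^ 2 + g.grad u u x))
    + ∑' x : Ω, g.μ x * (u x) ^ 2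

noncomputable def GraphData.lpIntO (g : GraphData V) (Ω : Set V) (p : ℝ) (u : V → ℝ) : ℝ :=
  ∑' x : Ω, g.μ x * |u x| ^ p

noncomputable def GraphData.JOmega (g : GraphData V) (Ω : Set V) (p : ℝ) (u : V → ℝ) : ℝ :=
  (1 / 2) * g.hnormSq Ω u - (1 / p) * g.lpIntO Ω p u

def GraphData.memH (g : GraphData V) (Ω : Set V) (u : V → ℝ) : Prop :=
  ∀ x ∉ Ω, u x = 0

def GraphData.NehariO (g : GraphData V) (Ω : Set V) (p : ℝ) : Set (V → ℝ) :=
  {u | u ≠ 0 ∧ g.memH Ω u ∧ g.hnormSq Ω u = g.lpIntO Ω p u}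

noncomputable def GraphData.JderivO (g : GraphData V) (Ω : Set V) (p : ℝ) (u φ : V → ℝ) : ℝ :=
  (∑' x : ↥(Ω ∪ g.bdry Ω), g.μ x * (g.lap u x * g.lap φ x + g.grad u φ x))
    + (∑' x : Ω, g.μ x * (u x * φ x))
    - ∑' x : Ω, g.μ x * (|u x| ^ (p - 2) * u x * φ x)

/-- The piecewise-linear radial cutoff η_k at scales k and 2k around x₀. -/
noncomputable def GraphData.cutoff (g : GraphData V) (x₀ : V) (k : ℕ) (x : V) : ℝ :=
  if g.G.dist x x₀ ≤ k then 1
  else if g.G.dist x x₀ < 2 * k then ((2 * k : ℝ) - g.G.dist x x₀) / k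
  else 0

theorem sq_mul_sub_self_sub_le (a b : ℝ) {s t : ℝ} (hs : s ∈ Set.Icc (0 : ℝ) 1)
    (ht : t ∈ Set.Icc (0 : ℝ) 1) :
    ((a * s - a) - (b * t - b)) ^ 2 ≤ 2 * (a - b) ^ 2 + 2 * b ^ 2 := by
  have h₁ : (s - 1) ^ 2 ≤ 1 := by nlinarith [hs.1, hs.2]
  have h₂ : (s - t) ^ 2 ≤ 1 := by nlinarith [hs.1, hs.2, ht.1, ht.2]
  calc ((a * s - a) - (b * t - b)) ^ 2 = ((s - 1) * (a - b) + (s - t) * b) ^ 2 := by ring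
    _ ≤ 2 * (((s - 1) * (a - b)) ^ 2 + ((s - t) * b) ^ 2) := add_sq_le
    _ = 2 * ((s - 1) ^ 2 * (a - b) ^ 2 + (s - t) ^ 2 * b ^ 2) := by ring
    _ ≤ 2 * (1 * (a - b) ^ 2 + 1 * b ^ 2) := by gcongr
    _ = 2 * (a - b) ^ 2 + 2 * b ^ 2 := by ring

namespace GraphData

variable (g : GraphData V)

noncomputable def energyDensity (w : V → ℝ) (x : V) : ℝ :=
  g.μ x * (g.grad w w x + w x ^ 2)

theorem tsum_eq_sum_toFinset_locfin (x : V) {f : V → ℝ} (hf : ∀ y, g.ω x y = 0 → f y = 0) :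
    ∑' y, f y = ∑ y ∈ (g.locfin x).toFinset, f y :=
  tsum_eq_sum fun y hy => hf y (by simpa using hy)

theorem mu_mul_grad_self (w : V → ℝ) (x : V) :
    g.μ x * g.grad w w x = (∑ y ∈ (g.locfin x).toFinset, g.ω x y * (w y - w x) ^ 2) / 2 := by
  have hμ := (g.μpos x).ne'
  rw [grad, g.tsum_eq_sum_toFinset_locfin x fun y h => by simp [h]]
  field_simp

theorem grad_self_nonneg (w : V → ℝ) (x : V) : 0 ≤ g.grad w w x := by
  have h := g.mu_mul_grad_self w x
  have hsum : 0 ≤ ∑ y ∈ (g.locfin x).toFinset, g.ω x y * (w y - w x) ^ 2 :=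
    Finset.sum_nonneg fun y _ => mul_nonneg (g.nonneg x y) (sq_nonneg _)
  exact nonneg_of_mul_nonneg_right (by linarith) (g.μpos x)

theorem energyDensity_nonneg (w : V → ℝ) (x : V) : 0 ≤ g.energyDensity w x :=
  mul_nonneg (g.μpos x).le (add_nonneg (g.grad_self_nonneg w x) (sq_nonneg _))

theorem energyDensity_neg (w : V → ℝ) (x : V) :
    g.energyDensity (fun y => -w y) x = g.energyDensity w x := by
  simp only [energyDensity, grad, neg_sq]
  congr 3
  exact tsum_congr fun y => by ring

theorem grad_self_eq_zero {w : V → ℝ} {x : V} (hw : ∀ y, g.G.Adj x y → w y = w x) :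
    g.grad w w x = 0 := by
  have hterm : ∀ y, g.ω x y * (w y - w x) * (w y - w x) = 0 := fun y => by
    rcases (g.nonneg x y).eq_or_lt with h | h
    · simp [← h]
    · simp [hw y h]
  simp [grad, hterm]

theorem energyDensity_eq_zero {w : V → ℝ} {x : V} (hx : w x = 0)
    (hw : ∀ y, g.G.Adj x y → w y = 0) : g.energyDensity w x = 0 := by
  rw [energyDensity, g.grad_self_eq_zero fun y hy => by rw [hw y hy, hx], hx]
  ring

theorem finite_setOf_dist_le (hconn : g.G.Connected) (x₀ : V) (n : ℕ) :
    {x | g.G.dist x x₀ ≤ n}.Finite := by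
  induction n with
  | zero =>
    refine (Set.finite_singleton x₀).subset fun x hx => ?_
    exact hconn.dist_eq_zero_iff.mp (Nat.le_zero.mp hx)
  | succ n ih =>
    have hnbrs : ∀ y, {z | g.G.Adj y z}.Finite := fun y =>
      (g.locfin y).subset fun z hz => ne_of_gt hz
    refine (ih.union (ih.biUnion fun y _ => hnbrs y)).subset fun x hx => ?_
    rcases (Nat.le_succ_iff.mp hx) with h | h
    · exact Or.inl h
    -- the first step of a shortest walk from `x` to `x₀` lands in the ball of radius `n`
    obtain ⟨p, hp⟩ := (hconn x x₀).exists_walk_length_eq_dist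
    rw [h] at hp
    cases p with
    | nil => simp at hp
    | @cons _ y _ hadj q =>
      refine Or.inr (Set.mem_biUnion (x := y) ?_ hadj.symm)
      have : q.length = n := by simpa using hp
      exact this ▸ SimpleGraph.dist_le q

theorem cutoff_nonneg (x₀ : V) (k : ℕ) (x : V) : 0 ≤ g.cutoff x₀ k x := by
  unfold cutoff
  split_ifs with h₁ h₂
  · exact zero_le_one
  · have : (g.G.dist x x₀ : ℝ) < 2 * k := by exact_mod_cast h₂
    exact div_nonneg (by linarith) k.cast_nonneg
  · exact le_rfl

theorem cutoff_le_one (x₀ : V) (k : ℕ) (x : V) : g.cutoff x₀ k x ≤ 1 := by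
  unfold cutoff
  split_ifs with h₁ h₂
  · exact le_rfl
  · have hk : (0 : ℝ) < k := by exact_mod_cast (by omega : 0 < k)
    have : (k : ℝ) < g.G.dist x x₀ := by exact_mod_cast not_le.mp h₁
    rw [div_le_one hk]
    linarith
  · exact zero_le_one

theorem cutoff_of_dist_le {x₀ : V} {k : ℕ} {x : V} (h : g.G.dist x x₀ ≤ k) :
    g.cutoff x₀ k x = 1 :=
  if_pos h

theorem cutoff_of_lt_dist {x₀ : V} {k : ℕ} {x : V} (h : 2 * k < g.G.dist x x₀) :
    g.cutoff x₀ k x = 0 := by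
  rw [cutoff, if_neg (by omega), if_neg (by omega)]

theorem support_mul_cutoff_finite (hconn : g.G.Connected) (x₀ : V) (u : V → ℝ) (k : ℕ) :
    (Function.support fun x => u x * g.cutoff x₀ k x).Finite := by
  refine (g.finite_setOf_dist_le hconn x₀ (2 * k)).subset fun x hx => ?_
  by_contra h
  exact hx (by simp [g.cutoff_of_lt_dist (not_le.mp h)])

theorem mu_mul_grad_mul_sub_self_le {C : ℝ} (hω : ∀ x, ∑' y, g.ω x y ≤ C) (u : V → ℝ)
    {h : V → ℝ} (hh : ∀ y, h y ∈ Set.Icc (0 : ℝ) 1) (x : V) :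
    g.μ x * g.grad (fun y => u y * h y - u y) (fun y => u y * h y - u y) x
      ≤ 2 * (g.μ x * g.grad u u x) + C * u x ^ 2 := by
  have hdeg : ∑ y ∈ (g.locfin x).toFinset, g.ω x y ≤ C := by
    rw [← g.tsum_eq_sum_toFinset_locfin x fun y h => h]
    exact hω x
  have hpoint : ∀ y ∈ (g.locfin x).toFinset,
      g.ω x y * ((u y * h y - u y) - (u x * h x - u x)) ^ 2
        ≤ 2 * (g.ω x y * (u y - u x) ^ 2) + 2 * u x ^ 2 * g.ω x y := fun y _ => by
    have := mul_le_mul_of_nonneg_left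
      (sq_mul_sub_self_sub_le (u y) (u x) (hh y) (hh x)) (g.nonneg x y)
    linarith
  have hsum := Finset.sum_le_sum hpoint
  rw [Finset.sum_add_distrib, ← Finset.mul_sum, ← Finset.mul_sum] at hsum
  rw [g.mu_mul_grad_self, g.mu_mul_grad_self]
  linarith [mul_le_mul_of_nonneg_left hdeg (sq_nonneg (u x))]

theorem energyDensity_mul_sub_self_le {μmin C : ℝ} (hμmin : 0 < μmin)
    (hμ : ∀ x, μmin ≤ g.μ x) (hω : ∀ x, ∑' y, g.ω x y ≤ C) (u : V → ℝ)
    {h : V → ℝ} (hh : ∀ y, h y ∈ Set.Icc (0 : ℝ) 1) (x : V) :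
    g.energyDensity (fun y => u y * h y - u y) x ≤ (3 + C / μmin) * g.energyDensity u x := by
  have hC : 0 ≤ C := (tsum_nonneg fun y => g.nonneg x y).trans (hω x)
  have hgrad := g.mu_mul_grad_mul_sub_self_le hω u hh x
  have hsq : (u x * h x - u x) ^ 2 ≤ u x ^ 2 := by
    have : (1 - h x) ^ 2 ≤ 1 := by nlinarith [(hh x).1, (hh x).2]
    calc (u x * h x - u x) ^ 2 = (1 - h x) ^ 2 * u x ^ 2 := by ring
      _ ≤ 1 * u x ^ 2 := by gcongr
      _ = u x ^ 2 := one_mul _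
  have hzeroth : C * u x ^ 2 ≤ C / μmin * (g.μ x * u x ^ 2) := by
    calc C * u x ^ 2 ≤ C * u x ^ 2 * (g.μ x / μmin) :=
          le_mul_of_one_le_right (by positivity) ((one_le_div hμmin).mpr (hμ x))
      _ = C / μmin * (g.μ x * u x ^ 2) := by ring
  have hμx := (g.μpos x).le
  have hE := g.grad_self_nonneg u x
  unfold energyDensity
  nlinarith [mul_le_mul_of_nonneg_left hsq hμx, mul_nonneg hμx hE,
    mul_nonneg (div_nonneg hC hμmin.le) (mul_nonneg hμx hE)]

theorem energyDensity_mul_cutoff_sub_self_eq_zero (x₀ : V) (u : V → ℝ) {k : ℕ} {x : V}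
    (hk : g.G.dist x x₀ < k) :
    g.energyDensity (fun y => u y * g.cutoff x₀ k y - u y) x = 0 := by
  have hball : ∀ y, g.G.dist y x₀ ≤ k → u y * g.cutoff x₀ k y - u y = 0 := fun y hy => by
    rw [g.cutoff_of_dist_le hy, mul_one, sub_self]
  refine g.energyDensity_eq_zero (hball x hk.le) fun y hadj => hball y ?_
  have h₁ : g.G.dist y x = 1 := SimpleGraph.dist_eq_one_iff_adj.mpr hadj.symm
  have h₂ := hadj.symm.reachable.dist_triangle_left x₀
  omega

theorem tendsto_tsum_energyDensity_mul_cutoff_sub_self {μmin C : ℝ} (hμmin : 0 < μmin)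
    (hμ : ∀ x, μmin ≤ g.μ x) (hω : ∀ x, ∑' y, g.ω x y ≤ C) (x₀ : V) {u : V → ℝ}
    (hu : Summable (g.energyDensity u)) :
    Tendsto (fun k : ℕ => ∑' x, g.energyDensity (fun y => u y * g.cutoff x₀ k y - u y) x)
      atTop (𝓝 0) := by
  have hcutoff : ∀ k y, g.cutoff x₀ k y ∈ Set.Icc (0 : ℝ) 1 := fun k y =>
    ⟨g.cutoff_nonneg x₀ k y, g.cutoff_le_one x₀ k y⟩
  have hlim := tendsto_tsum_of_dominated_convergence (hu.mul_left (3 + C / μmin))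
    (g := fun _ => (0 : ℝ))
    (fun x => tendsto_const_nhds.congr' <| (eventually_gt_atTop (g.G.dist x x₀)).mono
      fun k hk => (g.energyDensity_mul_cutoff_sub_self_eq_zero x₀ u hk).symm)
    (Eventually.of_forall fun k x => by
      rw [Real.norm_of_nonneg (g.energyDensity_nonneg _ x)]
      exact g.energyDensity_mul_sub_self_le hμmin hμ hω u (hcutoff k) x)
  simpa using hlim

end GraphData

/-- density of finitely supported functions in W^{1,2}(V) via cutoffs. -/
theorem stmt16 (g : GraphData V) (μmin C : ℝ) (hμmin : 0 < μmin)
    (hμ : ∀ x, μmin ≤ g.μ x) (hω : ∀ x, ∑' y, g.ω x y ≤ C)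
    (hconn : g.G.Connected) (x₀ : V)
    (u : V → ℝ) (hu : Summable fun x => g.μ x * (g.grad u u x + (u x) ^ 2)) :
    (∀ ε > 0, ∃ v : V → ℝ, (Function.support v).Finite ∧
      (∑' x, g.μ x * (g.grad (fun y => u y - v y) (fun y => u y - v y) x
          + (u x - v x) ^ 2)) < ε)
    ∧ (∀ k : ℕ, (Function.support fun x => u x * g.cutoff x₀ k x).Finite)
    ∧ Filter.Tendsto (fun k : ℕ => ∑' x, g.μ x *
        (g.grad (fun y => u y * g.cutoff x₀ k y - u y)
            (fun y => u y * g.cutoff x₀ k y - u y) x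
          + (u x * g.cutoff x₀ k x - u x) ^ 2)) Filter.atTop (nhds 0) := by
  have hlim := g.tendsto_tsum_energyDensity_mul_cutoff_sub_self hμmin hμ hω x₀ hu
  refine ⟨fun ε hε => ?_, g.support_mul_cutoff_finite hconn x₀ u, hlim⟩
  obtain ⟨k, hk⟩ := (hlim.eventually (gt_mem_nhds hε)).exists
  refine ⟨fun y => u y * g.cutoff x₀ k y, g.support_mul_cutoff_finite hconn x₀ u k, ?_⟩
  have hneg : ∀ x, g.energyDensity (fun y => u y - u y * g.cutoff x₀ k y) x
      = g.energyDensity (fun y => u y * g.cutoff x₀ k y - u y) x := fun x => by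
    rw [← g.energyDensity_neg]
    simp only [neg_sub]
  exact (tsum_congr hneg).trans_lt hk
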